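/- (Appendix, equation (12d).) For all subcarriers p, q ∈ {0,…,N−1} with p ≠ q, E[ conj(h̄(p)) · H̄^{ISI}_{pq} ] = (ρ̄(q−p) − 1) / ( N·(1 − e^{2πi(q−p)/N}) ), where ρ̄(η) = Σ_{ℓ=0}^{L−1} ρ(ℓ)·e^{−2πiℓη/N} for integers η. -/

import Mathlib

open Finset MeasureTheory

/-- Frequency-domain channel coefficient `h̄(p) = ∑_{ℓ=0}^{L-1} h(ℓ)·e^{-2πiℓp/N}`. -/
noncomputable def hBar {Ω : Type*} (N L : ℕ) (h : ℕ → Ω → ℂ) (p : ℕ) (ω : Ω) : ℂ :=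
  ∑ ℓ ∈ range L, h ℓ ω *
    Complex.exp (-(2 * (Real.pi : ℂ) * Complex.I * (ℓ : ℂ) * (p : ℂ)) / (N : ℂ))

/-- Frequency-domain ISI matrix entry
`H̄^{ISI}_{pq} = (1/N)·∑_{n=0}^{N-1} ∑_{ℓ=0}^{L-1} h(ℓ)·e^{2πi(nq-ℓq-np)/N}·𝟙[n < ℓ]`. -/
noncomputable def Hisi {Ω : Type*} (N L : ℕ) (h : ℕ → Ω → ℂ) (p q : ℕ) (ω : Ω) : ℂ :=
  (1 / (N : ℂ)) * ∑ n ∈ range N, ∑ ℓ ∈ range L,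
    h ℓ ω * Complex.exp (2 * (Real.pi : ℂ) * Complex.I *
      ((((n * q : ℕ) : ℤ) - ((ℓ * q : ℕ) : ℤ) - ((n * p : ℕ) : ℤ) : ℤ) : ℂ) / (N : ℂ)) *
    (if n < ℓ then 1 else 0)

/-- DFT of the power delay profile: `ρ̄(η) = ∑_{ℓ=0}^{L-1} ρ(ℓ)·e^{-2πiℓη/N}`. -/
noncomputable def rhoBar (N L : ℕ) (ρ : ℕ → ℝ) (η : ℤ) : ℂ :=
  ∑ ℓ ∈ range L, (ρ ℓ : ℂ) *
    Complex.exp (-(2 * (Real.pi : ℂ) * Complex.I * (ℓ : ℂ) * (η : ℂ)) / (N : ℂ))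

/-! Expanding both factors in the taps, the uncorrelatedness of the taps keeps only the diagonal
terms: with `ζ = e^{2πi/N}` and `Z = ζ^(q-p)` the expectation is
`∑_ℓ ρ(ℓ)/N · Z^{-ℓ} ∑_{n<ℓ} Z^n`, the cutoff `n < ℓ` being inside `range N` because `L ≤ N`.
Since `p ≠ q` are distinct residues mod `N`, `Z ≠ 1`, and the geometric sum turns each term into
`ρ(ℓ) (Z^{-ℓ} - 1) / (N (1 - Z))`; summing, `∑ ρ(ℓ) Z^{-ℓ} = ρ̄(q-p)` and `∑ ρ(ℓ) = 1`. -/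

open Complex Real ComplexConjugate

theorem integral_conj_sum_mul_sum_of_orthogonal {Ω ι : Type*} [MeasurableSpace Ω]
    {μ : Measure Ω} [DecidableEq ι] (s : Finset ι) (X : ι → Ω → ℂ)
    (σ a b : ι → ℂ)
    (hint : ∀ i ∈ s, ∀ j ∈ s, Integrable (fun ω => X i ω * conj (X j ω)) μ)
    (hcov : ∀ i ∈ s, ∀ j ∈ s, ∫ ω, X i ω * conj (X j ω) ∂μ = if i = j then σ i else 0) :
    ∫ ω, conj (∑ j ∈ s, X j ω * a j) * ∑ i ∈ s, X i ω * b i ∂μ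
      = ∑ i ∈ s, σ i * conj (a i) * b i := by
  have hexpand : ∀ ω, conj (∑ j ∈ s, X j ω * a j) * ∑ i ∈ s, X i ω * b i
      = ∑ i ∈ s, ∑ j ∈ s, X i ω * conj (X j ω) * (conj (a j) * b i) := by
    intro ω
    simp only [map_sum, map_mul, sum_mul, mul_sum]
    exact sum_congr rfl fun _ _ => sum_congr rfl fun _ _ => by ring
  simp_rw [hexpand]
  rw [integral_finsetSum _ fun i hi => integrable_finsetSum _ fun j hj =>
    (hint i hi j hj).mul_const _]
  refine sum_congr rfl fun i hi => ?_
  rw [integral_finsetSum _ fun j hj => (hint i hi j hj).mul_const _]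
  simp_rw [integral_mul_const]
  rw [sum_congr rfl fun j hj => by rw [hcov i hi j hj, ite_mul, zero_mul], sum_ite_eq s i,
    if_pos hi]
  ring

theorem inv_pow_mul_geom_sum {K : Type*} [Field K] {z : K} (hz0 : z ≠ 0) (hz1 : z ≠ 1) (n : ℕ) :
    z⁻¹ ^ n * ∑ k ∈ range n, z ^ k = (z⁻¹ ^ n - 1) / (1 - z) := by
  have h1 : 1 - z ≠ 0 := sub_ne_zero.2 (Ne.symm hz1)
  rw [geom_sum_eq hz1, inv_pow, eq_div_iff h1]
  field_simp
  ring

theorem IsPrimitiveRoot.zpow_sub_ne_one {M : Type*} [CommGroupWithZero M] {ζ : M} {N : ℕ}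
    (hζ : IsPrimitiveRoot ζ N) {p q : ℕ} (hp : p < N) (hq : q < N) (hpq : p ≠ q) :
    ζ ^ ((q : ℤ) - p) ≠ 1 := by
  have hζ0 : ζ ≠ 0 := hζ.ne_zero (by omega)
  rw [zpow_sub₀ hζ0, zpow_natCast, zpow_natCast, Ne, div_eq_one_iff_eq (pow_ne_zero _ hζ0)]
  exact fun h => hpq (hζ.pow_inj hq hp h).symm

theorem Complex.exp_two_pi_I_mul_int_div (N : ℕ) (k : ℤ) :
    exp (2 * π * I * k / N) = exp (2 * π * I / N) ^ k := by
  rw [← exp_int_mul]; ring_nf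

theorem Complex.conj_exp_neg_two_pi_I_mul_div (N ℓ p : ℕ) :
    conj (exp (-(2 * π * I * ℓ * p) / N)) = exp (2 * π * I / N) ^ ((ℓ * p : ℕ) : ℤ) := by
  rw [← exp_two_pi_I_mul_int_div, ← exp_conj]
  congr 1
  simp only [map_div₀, map_neg, map_mul, conj_I, conj_ofReal, map_ofNat, map_natCast]
  push_cast
  ring

theorem rhoBar_eq_sum_inv_pow (N L : ℕ) (ρ : ℕ → ℝ) (η : ℤ) :
    rhoBar N L ρ η = ∑ ℓ ∈ range L, (ρ ℓ : ℂ) * (exp (2 * π * I / N) ^ η)⁻¹ ^ ℓ := by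
  refine sum_congr rfl fun ℓ _ => ?_
  rw [← zpow_neg, ← zpow_natCast, ← zpow_mul, ← exp_two_pi_I_mul_int_div]
  push_cast
  ring_nf

theorem Hisi_eq_sum_range {Ω : Type*} {N L : ℕ} (hLN : L ≤ N) (h : ℕ → Ω → ℂ) (p q : ℕ)
    (ω : Ω) :
    Hisi N L h p q ω = ∑ ℓ ∈ range L, h ℓ ω * ((1 / N) * ∑ n ∈ range ℓ,
      exp (2 * π * I * ((((n * q : ℕ) : ℤ) - ((ℓ * q : ℕ) : ℤ) - ((n * p : ℕ) : ℤ) : ℤ) : ℂ)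
        / N)) := by
  rw [Hisi, sum_comm, mul_sum]
  refine sum_congr rfl fun ℓ hℓ => ?_
  have hfilter : (range N).filter (· < ℓ) = range ℓ := by
    ext n; simp only [mem_filter, mem_range]; have := mem_range.1 hℓ; omega
  simp only [mul_ite, mul_one, mul_zero]
  rw [← sum_filter, hfilter, mul_sum, mul_sum, mul_sum]
  exact sum_congr rfl fun n _ => by ring

theorem conj_hBar_coeff_mul_Hisi_coeff (N p q ℓ : ℕ) :
    conj (exp (-(2 * π * I * ℓ * p) / N)) * ((1 / N) * ∑ n ∈ range ℓ,
      exp (2 * π * I * ((((n * q : ℕ) : ℤ) - ((ℓ * q : ℕ) : ℤ) - ((n * p : ℕ) : ℤ) : ℤ) : ℂ)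
        / N))
      = (1 / N) * ((exp (2 * π * I / N) ^ ((q : ℤ) - p))⁻¹ ^ ℓ *
          ∑ n ∈ range ℓ, (exp (2 * π * I / N) ^ ((q : ℤ) - p)) ^ n) := by
  have hζ0 : exp (2 * π * I / N) ≠ 0 := exp_ne_zero _
  simp only [conj_exp_neg_two_pi_I_mul_div, exp_two_pi_I_mul_int_div, mul_sum]
  refine sum_congr rfl fun n _ => ?_
  rw [← zpow_neg, ← zpow_natCast, ← zpow_natCast, ← zpow_mul, ← zpow_mul, mul_left_comm,
    ← zpow_add₀ hζ0, ← zpow_add₀ hζ0]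
  push_cast
  ring_nf

theorem stmt4_general {Ω : Type*} [MeasurableSpace Ω] (μ : Measure Ω)
    (N L : ℕ) (hLN : L ≤ N)
    (ρ : ℕ → ℝ) (hsum : ∑ ℓ ∈ range L, ρ ℓ = 1)
    (h : ℕ → Ω → ℂ)
    (hint : ∀ ℓ ℓ', ℓ < L → ℓ' < L →
      Integrable (fun ω => h ℓ ω * (starRingEnd ℂ) (h ℓ' ω)) μ)
    (hcov : ∀ ℓ ℓ', ℓ < L → ℓ' < L →
      ∫ ω, h ℓ ω * (starRingEnd ℂ) (h ℓ' ω) ∂μ = if ℓ = ℓ' then ((ρ ℓ : ℝ) : ℂ) else 0)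
    (p q : ℕ) (hp : p < N) (hq : q < N) (hpq : p ≠ q) :
    ∫ ω, (starRingEnd ℂ) (hBar N L h p ω) * Hisi N L h p q ω ∂μ
      = (rhoBar N L ρ ((q : ℤ) - (p : ℤ)) - 1) /
        ((N : ℂ) * (1 - Complex.exp (2 * (Real.pi : ℂ) * Complex.I *
          (((q : ℤ) - (p : ℤ) : ℤ) : ℂ) / (N : ℂ)))) := by
  have hN : N ≠ 0 := by omega
  have hζ : IsPrimitiveRoot (exp (2 * π * I / N)) N := isPrimitiveRoot_exp N hN
  set Z := exp (2 * π * I / N) ^ ((q : ℤ) - p)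
  have hZ0 : Z ≠ 0 := zpow_ne_zero _ (hζ.ne_zero hN)
  have hZ1 : Z ≠ 1 := hζ.zpow_sub_ne_one hp hq hpq
  calc _ = ∑ ℓ ∈ range L, (ρ ℓ : ℂ) * conj (exp (-(2 * π * I * ℓ * p) / N)) * ((1 / N) *
          ∑ n ∈ range ℓ, exp (2 * π * I *
            ((((n * q : ℕ) : ℤ) - ((ℓ * q : ℕ) : ℤ) - ((n * p : ℕ) : ℤ) : ℤ) : ℂ) / N)) := by
        simp_rw [Hisi_eq_sum_range hLN]
        exact integral_conj_sum_mul_sum_of_orthogonal _ _ _ _ _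
          (fun i hi j hj => hint i j (mem_range.1 hi) (mem_range.1 hj))
          (fun i hi j hj => hcov i j (mem_range.1 hi) (mem_range.1 hj))
    _ = ∑ ℓ ∈ range L, ((ρ ℓ : ℂ) * Z⁻¹ ^ ℓ - ρ ℓ) / (N * (1 - Z)) := by
        refine sum_congr rfl fun ℓ _ => ?_
        rw [mul_assoc, conj_hBar_coeff_mul_Hisi_coeff, inv_pow_mul_geom_sum hZ0 hZ1]
        field_simp
    _ = _ := by
        rw [← sum_div, sum_sub_distrib, ← ofReal_sum, hsum, ofReal_one, rhoBar_eq_sum_inv_pow,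
          exp_two_pi_I_mul_int_div]

/-- Appendix, equation (12d): for `p ≠ q`,
`E[conj(h̄(p)) · H̄^{ISI}_{pq}] = (ρ̄(q-p) - 1) / (N·(1 - e^{2πi(q-p)/N}))`. -/
theorem stmt4 {Ω : Type*} [MeasurableSpace Ω] (μ : Measure Ω) [IsProbabilityMeasure μ]
    (N L : ℕ) (hL1 : 1 ≤ L) (hLN : L ≤ N)
    (ρ : ℕ → ℝ) (hnn : ∀ ℓ, 0 ≤ ρ ℓ) (hsum : ∑ ℓ ∈ range L, ρ ℓ = 1)
    (h : ℕ → Ω → ℂ)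
    (hint : ∀ ℓ ℓ', ℓ < L → ℓ' < L →
      Integrable (fun ω => h ℓ ω * (starRingEnd ℂ) (h ℓ' ω)) μ)
    (hmean : ∀ ℓ, ℓ < L → ∫ ω, h ℓ ω ∂μ = 0)
    (hcov : ∀ ℓ ℓ', ℓ < L → ℓ' < L →
      ∫ ω, h ℓ ω * (starRingEnd ℂ) (h ℓ' ω) ∂μ = if ℓ = ℓ' then ((ρ ℓ : ℝ) : ℂ) else 0)
    (p q : ℕ) (hp : p < N) (hq : q < N) (hpq : p ≠ q) :
    ∫ ω, (starRingEnd ℂ) (hBar N L h p ω) * Hisi N L h p q ω ∂μ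
      = (rhoBar N L ρ ((q : ℤ) - (p : ℤ)) - 1) /
        ((N : ℂ) * (1 - Complex.exp (2 * (Real.pi : ℂ) * Complex.I *
          (((q : ℤ) - (p : ℤ) : ℤ) : ℂ) / (N : ℂ)))) :=
  stmt4_general μ N L hLN ρ hsum h hint hcov p q hp hq hpq
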